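/- Let u, ũ ∈ ℝ³ be unit vectors with u ≠ ũ (so ρ(u), ρ(ũ) are pure one-qubit states), let q ∈ ℝ³ be a unit vector, and let r ∈ (0,1). Then the following are equivalent: (1) D(ρ(u)‖ρ(r·q)) = D(ρ(ũ)‖ρ(r·q)); (2) ⟨q, u − ũ⟩ = 0; (3) ‖q − u‖ = ‖q − ũ‖ (Euclidean distance in ℝ³). Consequently, for one-qubit pure states the Voronoi bisector obtained as the limit of divergence bisectors, the geodesic bisector on the Bloch sphere, and the section of the Euclidean bisector with the sphere all coincide. -/

import Mathlib

open scoped ComplexOrder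

/-!
The eigenvalues of `ρ(v)` are `(1 ± ‖v‖) / 2`. For a pure state they are `0` and `1`, so
`log ρ(u) = 0` (with the convention `log 0 = 0`) and `D(ρ(u)‖ρ) = -Re Tr (ρ(u) log ρ)`. For
`ρ = ρ(r q)` with `0 < r < 1`, `log` agrees on the two eigenvalues with an affine function
`c + d x` of positive slope, so `log ρ = c + d ρ`; together with `Tr (ρ(u) ρ(w)) = (1 + ⟪u, w⟫) / 2`
this makes `D(ρ(u)‖ρ(r q))` a strictly decreasing affine function of `⟪u, q⟫`. On the other side,
`‖q - u‖² = ‖q‖² - 2 ⟪q, u⟫ + 1` for a unit vector `u`.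
-/

noncomputable def matLog {n : Type*} [Fintype n] [DecidableEq n]
    (A : Matrix n n ℂ) : Matrix n n ℂ := cfc Real.log A

noncomputable def qDiv {n : Type*} [Fintype n] [DecidableEq n]
    (σ ρ : Matrix n n ℂ) : ℝ := (Matrix.trace (σ * (matLog σ - matLog ρ))).re

noncomputable def rho2 (v : Fin 3 → ℝ) : Matrix (Fin 2) (Fin 2) ℂ :=
  !![((1 + v 2) / 2 : ℂ), ((v 0 : ℂ) - Complex.I * (v 1 : ℂ)) / 2;
     ((v 0 : ℂ) + Complex.I * (v 1 : ℂ)) / 2, ((1 - v 2) / 2 : ℂ)]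

lemma matLog_eq_smul_one_add_smul {n : Type*} [Fintype n] [DecidableEq n]
    {A : Matrix n n ℂ} (hA : IsSelfAdjoint A) {c d : ℝ}
    (h : ∀ x ∈ spectrum ℝ A, Real.log x = c + d * x) :
    matLog A = c • (1 : Matrix n n ℂ) + d • A := by
  rw [matLog, cfc_congr h, cfc_add .., cfc_const c A hA, cfc_const_mul .., cfc_id' ℝ A hA,
    Algebra.algebraMap_eq_smul_one]

lemma rho2_isSelfAdjoint (v : Fin 3 → ℝ) : IsSelfAdjoint (rho2 v) := by
  ext i j
  fin_cases i <;> fin_cases j <;> simp [rho2, Matrix.star_apply, Complex.ext_iff]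

lemma det_sub_eq_zero_of_mem_spectrum {A : Matrix (Fin 2) (Fin 2) ℂ} {x : ℝ}
    (hx : x ∈ spectrum ℝ A) : ((x : ℂ) - A 0 0) * ((x : ℂ) - A 1 1) - A 0 1 * A 1 0 = 0 := by
  rw [spectrum.mem_iff, Matrix.isUnit_iff_isUnit_det, isUnit_iff_ne_zero, not_not,
    Matrix.det_fin_two] at hx
  simpa [Matrix.algebraMap_eq_diagonal, Matrix.diagonal] using hx

lemma two_mul_sub_one_sq_of_mem_spectrum_rho2 {v : Fin 3 → ℝ} {x : ℝ}
    (hx : x ∈ spectrum ℝ (rho2 v)) : (2 * x - 1) ^ 2 = v 0 ^ 2 + v 1 ^ 2 + v 2 ^ 2 := by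
  have h := det_sub_eq_zero_of_mem_spectrum hx
  simp only [rho2, Matrix.of_apply, Matrix.cons_val', Matrix.cons_val_zero, Matrix.cons_val_one,
    Matrix.empty_val', Matrix.cons_val_fin_one] at h
  have : (((2 * x - 1) ^ 2 : ℝ) : ℂ) = ((v 0 ^ 2 + v 1 ^ 2 + v 2 ^ 2 : ℝ) : ℂ) := by
    push_cast
    linear_combination 4 * h - (v 1 : ℂ) ^ 2 * Complex.I_sq
  exact_mod_cast this

lemma matLog_rho2_of_pure {u : Fin 3 → ℝ} (hu : u 0 ^ 2 + u 1 ^ 2 + u 2 ^ 2 = 1) :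
    matLog (rho2 u) = 0 := by
  have hlog : ∀ x ∈ spectrum ℝ (rho2 u), Real.log x = 0 + 0 * x := by
    intro x hx
    have hx01 : x * (x - 1) = 0 := by
      linear_combination (two_mul_sub_one_sq_of_mem_spectrum_rho2 hx).trans hu / 4
    rcases mul_eq_zero.1 hx01 with h | h
    · simp [h]
    · simp [sub_eq_zero.1 h]
  simpa using matLog_eq_smul_one_add_smul (rho2_isSelfAdjoint u) hlog

lemma exists_matLog_rho2_eq_smul_one_add_smul {v : Fin 3 → ℝ} {s : ℝ}
    (hv : v 0 ^ 2 + v 1 ^ 2 + v 2 ^ 2 = s ^ 2) (hs0 : 0 < s) (hs1 : s < 1) :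
    ∃ c d : ℝ, 0 < d ∧ matLog (rho2 v) = c • (1 : Matrix (Fin 2) (Fin 2) ℂ) + d • rho2 v := by
  set α := Real.log ((1 + s) / 2)
  set β := Real.log ((1 - s) / 2)
  have hβα : β < α := Real.log_lt_log (by linarith) (by linarith)
  refine ⟨(α + β) / 2 - (α - β) / s / 2, (α - β) / s, div_pos (by linarith) hs0,
    matLog_eq_smul_one_add_smul (rho2_isSelfAdjoint v) fun x hx => ?_⟩
  have hx : (2 * x - 1 - s) * (2 * x - 1 + s) = 0 := by
    linear_combination (two_mul_sub_one_sq_of_mem_spectrum_rho2 hx).trans hv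
  rcases mul_eq_zero.1 hx with h | h
  · obtain rfl : x = (1 + s) / 2 := by linarith
    field_simp
    ring
  · obtain rfl : x = (1 - s) / 2 := by linarith
    field_simp
    ring

lemma trace_rho2 (v : Fin 3 → ℝ) : (rho2 v).trace = 1 := by
  simp only [rho2, Matrix.trace_fin_two, Matrix.of_apply, Matrix.cons_val', Matrix.cons_val_zero,
    Matrix.cons_val_one, Matrix.empty_val', Matrix.cons_val_fin_one]
  ring

lemma trace_rho2_mul_rho2 (v w : Fin 3 → ℝ) :
    (rho2 v * rho2 w).trace = ((1 + (v 0 * w 0 + v 1 * w 1 + v 2 * w 2)) / 2 : ℝ) := by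
  simp only [rho2, Matrix.trace_fin_two, Matrix.mul_apply, Fin.sum_univ_two, Matrix.of_apply,
    Matrix.cons_val', Matrix.cons_val_zero, Matrix.cons_val_one, Matrix.empty_val',
    Matrix.cons_val_fin_one]
  push_cast
  linear_combination (-(v 1 : ℂ) * (w 1 : ℂ) / 2) * Complex.I_sq

lemma qDiv_rho2_of_pure {u w : Fin 3 → ℝ} (hu : u 0 ^ 2 + u 1 ^ 2 + u 2 ^ 2 = 1) {c d : ℝ}
    (hw : matLog (rho2 w) = c • (1 : Matrix (Fin 2) (Fin 2) ℂ) + d • rho2 w) :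
    qDiv (rho2 u) (rho2 w) = -(c + d * ((1 + (u 0 * w 0 + u 1 * w 1 + u 2 * w 2)) / 2)) := by
  rw [qDiv, matLog_rho2_of_pure hu, hw, zero_sub, mul_neg, mul_add, mul_smul_comm, mul_smul_comm,
    mul_one, Matrix.trace_neg, Matrix.trace_add, Matrix.trace_smul, Matrix.trace_smul, trace_rho2,
    trace_rho2_mul_rho2]
  simp [Complex.real_smul]

lemma sqrt_dist_eq_iff_of_sphere {u u' q : Fin 3 → ℝ} (hu : u 0 ^ 2 + u 1 ^ 2 + u 2 ^ 2 = 1)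
    (hu' : u' 0 ^ 2 + u' 1 ^ 2 + u' 2 ^ 2 = 1) :
    q 0 * (u 0 - u' 0) + q 1 * (u 1 - u' 1) + q 2 * (u 2 - u' 2) = 0 ↔
      Real.sqrt ((q 0 - u 0) ^ 2 + (q 1 - u 1) ^ 2 + (q 2 - u 2) ^ 2) =
        Real.sqrt ((q 0 - u' 0) ^ 2 + (q 1 - u' 1) ^ 2 + (q 2 - u' 2) ^ 2) := by
  rw [Real.sqrt_inj (by positivity) (by positivity)]
  constructor <;> intro h
  · linear_combination hu - hu' - 2 * h
  · linear_combination (hu - hu' - h) / 2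

theorem one_qubit_bisectors_coincide_general
    (u u' q : Fin 3 → ℝ)
    (hu : u 0 ^ 2 + u 1 ^ 2 + u 2 ^ 2 = 1)
    (hu' : u' 0 ^ 2 + u' 1 ^ 2 + u' 2 ^ 2 = 1)
    (hq : q 0 ^ 2 + q 1 ^ 2 + q 2 ^ 2 = 1)
    (r : ℝ) (hr0 : 0 < r) (hr1 : r < 1) :
    (qDiv (rho2 u) (rho2 (fun i => r * q i)) =
        qDiv (rho2 u') (rho2 (fun i => r * q i)) ↔
      q 0 * (u 0 - u' 0) + q 1 * (u 1 - u' 1) + q 2 * (u 2 - u' 2) = 0) ∧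
    (q 0 * (u 0 - u' 0) + q 1 * (u 1 - u' 1) + q 2 * (u 2 - u' 2) = 0 ↔
      Real.sqrt ((q 0 - u 0) ^ 2 + (q 1 - u 1) ^ 2 + (q 2 - u 2) ^ 2) =
        Real.sqrt ((q 0 - u' 0) ^ 2 + (q 1 - u' 1) ^ 2 + (q 2 - u' 2) ^ 2)) := by
  obtain ⟨c, d, hd, hlog⟩ := exists_matLog_rho2_eq_smul_one_add_smul
    (v := fun i => r * q i) (by linear_combination r ^ 2 * hq) hr0 hr1
  rw [qDiv_rho2_of_pure hu hlog, qDiv_rho2_of_pure hu' hlog]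
  refine ⟨⟨fun h => ?_, fun h => by linear_combination -(d * r) / 2 * h⟩,
    sqrt_dist_eq_iff_of_sphere hu hu'⟩
  have hdr : d * r * (q 0 * (u 0 - u' 0) + q 1 * (u 1 - u' 1) + q 2 * (u 2 - u' 2)) = 0 := by
    linear_combination -2 * h
  exact (mul_eq_zero.1 hdr).resolve_left (by positivity)

theorem one_qubit_bisectors_coincide
    (u u' q : Fin 3 → ℝ)
    (hu : u 0 ^ 2 + u 1 ^ 2 + u 2 ^ 2 = 1)
    (hu' : u' 0 ^ 2 + u' 1 ^ 2 + u' 2 ^ 2 = 1)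
    (hne : u ≠ u')
    (hq : q 0 ^ 2 + q 1 ^ 2 + q 2 ^ 2 = 1)
    (r : ℝ) (hr0 : 0 < r) (hr1 : r < 1) :
    (qDiv (rho2 u) (rho2 (fun i => r * q i)) =
        qDiv (rho2 u') (rho2 (fun i => r * q i)) ↔
      q 0 * (u 0 - u' 0) + q 1 * (u 1 - u' 1) + q 2 * (u 2 - u' 2) = 0) ∧
    (q 0 * (u 0 - u' 0) + q 1 * (u 1 - u' 1) + q 2 * (u 2 - u' 2) = 0 ↔
      Real.sqrt ((q 0 - u 0) ^ 2 + (q 1 - u 1) ^ 2 + (q 2 - u 2) ^ 2) =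
        Real.sqrt ((q 0 - u' 0) ^ 2 + (q 1 - u' 1) ^ 2 + (q 2 - u' 2) ^ 2)) :=
  one_qubit_bisectors_coincide_general u u' q hu hu' hq r hr0 hr1
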